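/- arXiv:1401.5140 — 2 statements merged into one kernel-verified Lean document; each statement's English description precedes it below -/
import Mathlib

section
/- For integers m ≥ 2 and w with 0 < w < m and gcd(w, m) = 1, the Dedekind sum s(w; m) = (1/(4m)) ∑_{k=1}^{m-1} cot(πk/m) cot(πkw/m) satisfies 12·w·m·s(w; m) ≡ w² + 1 (mod m). -/
/-!
Write `((a/m))` for the sawtooth function and `e(x) = exp (2πi x / m)`. For `m ∤ j` one has the
finite Fourier expansion `cot (π j / m) = 2i ∑ₐ ((a/m)) e(a j)`, because `∑ₐ ((a/m)) x ^ a` equals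
`1 / (x - 1) + 1 / 2` at every `m`-th root of unity `x ≠ 1`. Substituting it into both cotangents
and summing over `k` with the orthogonality of characters gives the classical formula
`s(w; m) = ∑_b ((b/m)) ((w b/m))`.

Let `r_b` be the residue of `w b` modulo `m`. Since `b ↦ r_b` permutes the residues,
`∑ r_b² = ∑ b²`, and then `∑ (w b - r_b)² ≡ 0 (mod m²)` reads
`2 w ∑ b r_b ≡ (w² + 1) ∑ b² (mod m²)`. Inserting this in
`12 w m ∑ ((b/m)) ((w b/m)) = 12 w ∑ b r_b / m - 3 w m (m - 1)` gives
`12 w m s(w; m) = (w² + 1)(m - 1)(2m - 1) - m Q'` for an integer `Q'`, and `(m - 1)(2m - 1) ≡ 1`.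
-/

/-- The Dedekind sum `s(w; m) = (1/(4m)) ∑_{k=1}^{m-1} cot(πk/m) cot(πkw/m)`. -/
noncomputable def dedekindSum (w m : ℕ) : ℝ :=
  (1 / (4 * (m : ℝ))) *
    ∑ k ∈ Finset.Ico 1 m,
      Real.cot (Real.pi * k / m) * Real.cot (Real.pi * (k * w) / m)

open Finset Complex ZMod

theorem sum_range_natCast_mul_pow_of_pow_eq_one {K : Type*} [Field K] {m : ℕ} {x : K}
    (hx : x ^ m = 1) (hx1 : x ≠ 1) : ∑ n ∈ range m, (n : K) * x ^ n = m / (x - 1) := by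
  have telescope : ∀ k : ℕ,
      (x - 1) * ∑ n ∈ range k, (n : K) * x ^ n + ∑ n ∈ range k, x ^ (n + 1) = k * x ^ k := by
    intro k
    induction k with
    | zero => simp
    | succ k ih =>
      rw [sum_range_succ, sum_range_succ]
      push_cast
      linear_combination ih
  have hgeom : ∑ n ∈ range m, x ^ (n + 1) = 0 := by
    simp_rw [pow_succ, ← sum_mul, geom_sum_eq hx1, hx, sub_self, zero_div, zero_mul]
  rw [eq_div_iff (sub_ne_zero.2 hx1), mul_comm]
  simpa [hgeom, hx] using telescope m

section PowerSums

variable {R : Type*} [CommRing R]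

theorem two_mul_sum_range_natCast (n : ℕ) : 2 * ∑ i ∈ range n, (i : R) = n * (n - 1) := by
  induction n with
  | zero => simp
  | succ n ih =>
    rw [sum_range_succ, mul_add, ih]
    push_cast
    ring

theorem six_mul_sum_range_natCast_sq (n : ℕ) :
    6 * ∑ i ∈ range n, (i : R) ^ 2 = n * (n - 1) * (2 * n - 1) := by
  induction n with
  | zero => simp
  | succ n ih =>
    rw [sum_range_succ, mul_add, ih]
    push_cast
    ring

end PowerSums

namespace ZMod

variable {m : ℕ} [NeZero m] {M : Type*} [AddCommMonoid M]

theorem sum_comp_val (g : ℕ → M) : ∑ x : ZMod m, g x.val = ∑ n ∈ range m, g n :=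
  sum_nbij' val Nat.cast (fun x _ => mem_range.2 x.val_lt) (fun _ _ => mem_univ _)
    (fun x _ => natCast_zmod_val x) (fun _ hn => val_cast_of_lt (mem_range.1 hn)) (fun _ _ => rfl)

theorem sum_Ico_one_natCast {f : ZMod m → M} (hf : f 0 = 0) :
    ∑ k ∈ Ico 1 m, f k = ∑ x, f x := by
  calc ∑ k ∈ Ico 1 m, f k = ∑ k ∈ range m, f k := by
        rw [range_eq_Ico, sum_eq_sum_Ico_succ_bot (NeZero.pos m), Nat.cast_zero, hf, zero_add]
    _ = ∑ x, f x := by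
        rw [← sum_comp_val (fun n => f n)]
        simp only [natCast_zmod_val]

theorem sum_comp_natCast_mul {w : ℕ} (hw : w.Coprime m) (f : ZMod m → M) :
    ∑ x, f (w * x) = ∑ x, f x :=
  Fintype.sum_equiv (Units.mulLeft (unitOfCoprime w hw)) _ _ (fun _ => rfl)

theorem sum_mul_sum_stdAddChar (f g : ZMod m → ℂ) (h : ZMod m → ZMod m) :
    ∑ k, (∑ a, f a * stdAddChar (a * k)) * (∑ b, g b * stdAddChar (h b * k)) =
      m * ∑ b, f (-h b) * g b := by
  have horth : ∀ a b, ∑ k : ZMod m, stdAddChar (a * k) * stdAddChar (h b * k) =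
      if a = -h b then (m : ℂ) else 0 := fun a b => by
    simp_rw [← AddChar.map_add_eq_mul, ← add_mul, mul_comm (a + h b),
      AddChar.sum_mulShift _ (isPrimitive_stdAddChar m), ZMod.card, add_eq_zero_iff_eq_neg,
      Nat.cast_ite, Nat.cast_zero]
  calc _ = ∑ b, ∑ a, f a * g b * ∑ k : ZMod m, stdAddChar (a * k) * stdAddChar (h b * k) := by
        simp_rw [sum_mul_sum, mul_sum]
        rw [sum_comm]
        conv_rhs => rw [sum_comm]
        refine sum_congr rfl fun a _ => ?_
        rw [sum_comm]
        exact sum_congr rfl fun b _ => sum_congr rfl fun k _ => by ring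
    _ = m * ∑ b, f (-h b) * g b := by
        simp_rw [horth, mul_ite, mul_zero, sum_ite_eq', mem_univ, if_true, mul_sum]
        exact sum_congr rfl fun b _ => by ring

end ZMod

section Sawtooth

variable {m : ℕ}

/-- The sawtooth function `((a/m))`. -/
noncomputable def sawtooth (a : ZMod m) : ℝ := if a = 0 then 0 else a.val / m - 1 / 2

@[simp] theorem sawtooth_zero : sawtooth (0 : ZMod m) = 0 := if_pos rfl

theorem sawtooth_of_ne_zero {a : ZMod m} (ha : a ≠ 0) : sawtooth a = a.val / m - 1 / 2 :=
  if_neg ha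

variable [NeZero m]

theorem sawtooth_neg (a : ZMod m) : sawtooth (-a) = -sawtooth a := by
  by_cases ha : a = 0
  · simp [ha]
  · have : NeZero a := ⟨ha⟩
    have hm : (m : ℝ) ≠ 0 := NeZero.ne _
    rw [sawtooth_of_ne_zero ha, sawtooth_of_ne_zero (neg_ne_zero.2 ha), val_neg_of_ne_zero,
      Nat.cast_sub a.val_lt.le]
    field_simp
    ring

theorem sum_sawtooth : ∑ a : ZMod m, sawtooth a = 0 := by
  have h := Fintype.sum_equiv (Equiv.neg (ZMod m)) (fun a => sawtooth (-a)) sawtooth (fun _ => rfl)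
  simp only [sawtooth_neg, sum_neg_distrib] at h
  linarith

theorem sum_sawtooth_mul_pow {x : ℂ} (hx : x ^ m = 1) (hx1 : x ≠ 1) :
    ∑ a : ZMod m, (sawtooth a : ℂ) * x ^ a.val = 1 / (x - 1) + 1 / 2 := by
  have hm : (m : ℂ) ≠ 0 := NeZero.ne _
  have hterm : ∀ a : ZMod m, (sawtooth a : ℂ) * x ^ a.val =
      (1 / m) * (a.val * x ^ a.val) - (1 / 2) * x ^ a.val + if a = 0 then 1 / 2 else 0 := by
    intro a
    by_cases ha : a = 0
    · simp [ha]
    · rw [sawtooth_of_ne_zero ha, if_neg ha]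
      push_cast
      ring
  simp only [hterm, sum_add_distrib, sum_sub_distrib, ← mul_sum, sum_ite_eq', mem_univ, if_true,
    sum_comp_val (fun n => (n : ℂ) * x ^ n), sum_comp_val (x ^ ·),
    sum_range_natCast_mul_pow_of_pow_eq_one hx hx1, geom_sum_eq hx1, hx, sub_self, zero_div]
  field_simp
  ring

theorem cot_eq_sum_sawtooth_mul_stdAddChar {j : ℕ} (hj : ¬ m ∣ j) :
    (Real.cot (Real.pi * j / m) : ℂ) =
      2 * I * ∑ a : ZMod m, (sawtooth a : ℂ) * stdAddChar (a * (j : ZMod m)) := by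
  set x : ℂ := stdAddChar (j : ZMod m) with hx
  have hψ : ∀ a : ZMod m, stdAddChar (a * (j : ZMod m)) = x ^ a.val := fun a => by
    rw [hx, ← AddChar.map_nsmul_eq_pow, nsmul_eq_mul, natCast_zmod_val]
  have hxm : x ^ m = 1 := by
    rw [hx, ← AddChar.map_nsmul_eq_pow, nsmul_eq_mul, natCast_self, zero_mul,
      AddChar.map_zero_eq_one]
  have hx1 : x ≠ 1 := by
    rwa [hx, ← AddChar.map_zero_eq_one (stdAddChar (N := m)), injective_stdAddChar.ne_iff, Ne,
      natCast_eq_zero_iff]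
  have hexp : Complex.exp (2 * I * (Real.pi * j / m : ℝ)) = x := by
    rw [hx, stdAddChar_apply, toCircle_natCast]
    push_cast
    ring_nf
  have : x - 1 ≠ 0 := sub_ne_zero.2 hx1
  have : 1 - x ≠ 0 := sub_ne_zero.2 hx1.symm
  simp only [hψ, sum_sawtooth_mul_pow hxm hx1, Complex.ofReal_cot, Complex.cot_eq_exp_ratio, hexp]
  field_simp
  linear_combination (x ^ 2 - 1) * I_sq

theorem four_mul_sq_mul_sum_sawtooth_mul_sawtooth {w : ℕ} (hw : w.Coprime m) :
    4 * m ^ 2 * ∑ b : ZMod m, sawtooth b * sawtooth ((w : ZMod m) * b) =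
      4 * ∑ b : ZMod m, (b.val : ℝ) * ((w : ZMod m) * b).val - m ^ 2 * (m - 1) := by
  have hm : (m : ℝ) ≠ 0 := NeZero.ne _
  have hterm : ∀ b : ZMod m, 4 * m ^ 2 * (sawtooth b * sawtooth ((w : ZMod m) * b)) =
      4 * (b.val * ((w : ZMod m) * b).val) - 2 * m * b.val - 2 * m * ((w : ZMod m) * b).val
        + m ^ 2 - if b = 0 then (m : ℝ) ^ 2 else 0 := fun b => by
    by_cases hb : b = 0
    · simp [hb]
    · have hwb : (w : ZMod m) * b ≠ 0 := by
        rwa [← coe_unitOfCoprime w hw, Ne, Units.mul_right_eq_zero]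
      rw [sawtooth_of_ne_zero hb, sawtooth_of_ne_zero hwb, if_neg hb]
      field_simp
      ring
  have hperm : ∑ b : ZMod m, (((w : ZMod m) * b).val : ℝ) = ∑ b : ZMod m, (b.val : ℝ) :=
    sum_comp_natCast_mul hw (fun x => (x.val : ℝ))
  have hgauss : 2 * ∑ b : ZMod m, (b.val : ℝ) = m * (m - 1) := by
    rw [sum_comp_val (fun n => (n : ℝ)), two_mul_sum_range_natCast]
  simp only [mul_sum, hterm, sum_add_distrib, sum_sub_distrib, sum_const, card_univ, ZMod.card,
    nsmul_eq_mul, sum_ite_eq', mem_univ, if_true]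
  simp only [← mul_sum]
  linear_combination (-2 * m : ℝ) * hgauss - 2 * m * hperm

end Sawtooth

theorem sum_cot_mul_cot_eq_sum_sawtooth_mul_sawtooth {w m : ℕ} [NeZero m] (hw : w.Coprime m) :
    ∑ k ∈ Ico 1 m, Real.cot (Real.pi * k / m) * Real.cot (Real.pi * (k * w) / m) =
      4 * m * ∑ b : ZMod m, sawtooth b * sawtooth ((w : ZMod m) * b) := by
  set F : ZMod m → ℂ := fun j => ∑ a, (sawtooth a : ℂ) * stdAddChar (a * j) with hF
  set G : ZMod m → ℂ := fun j => ∑ b, (sawtooth b : ℂ) * stdAddChar ((w : ZMod m) * b * j)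
  have hterm : ∀ k ∈ Ico 1 m,
      ((Real.cot (Real.pi * k / m) * Real.cot (Real.pi * (k * w) / m) : ℝ) : ℂ) =
        -4 * (F k * G k) := fun k hk => by
    obtain ⟨hk1, hkm⟩ := mem_Ico.1 hk
    have hk : ¬ m ∣ k := fun h => absurd (Nat.le_of_dvd hk1 h) (by omega)
    have hkw := cot_eq_sum_sawtooth_mul_stdAddChar fun h => hk (hw.symm.dvd_of_dvd_mul_right h)
    simp only [Nat.cast_mul] at hkw
    rw [ofReal_mul, cot_eq_sum_sawtooth_mul_stdAddChar hk, hkw]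
    simp only [G, mul_comm (w : ZMod m), mul_assoc]
    linear_combination (4 * F k * F (k * w)) * I_sq
  have hF0 : F 0 = 0 := by
    simp [hF, ← ofReal_sum, sum_sawtooth]
  have hsum : ((∑ k ∈ Ico 1 m, Real.cot (Real.pi * k / m) * Real.cot (Real.pi * (k * w) / m) : ℝ)
      : ℂ) = 4 * m * ∑ b : ZMod m, (sawtooth b : ℂ) * sawtooth ((w : ZMod m) * b) := by
    rw [ofReal_sum, sum_congr rfl hterm, ← mul_sum,
      sum_Ico_one_natCast (f := fun k => F k * G k) (by simp [hF0]), hF, sum_mul_sum_stdAddChar]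
    simp only [sawtooth_neg, ofReal_neg, mul_sum]
    exact sum_congr rfl fun b _ => by ring
  exact_mod_cast hsum

theorem dedekindSum_eq_sum_sawtooth_mul_sawtooth {w m : ℕ} [NeZero m] (hw : w.Coprime m) :
    dedekindSum w m = ∑ b : ZMod m, sawtooth b * sawtooth ((w : ZMod m) * b) := by
  have hm : (m : ℝ) ≠ 0 := NeZero.ne _
  rw [dedekindSum, sum_cot_mul_cot_eq_sum_sawtooth_mul_sawtooth hw]
  field_simp

theorem sq_dvd_sum_val_sq_sub_sum_val_mul_val {m w : ℕ} [NeZero m] (hw : w.Coprime m) :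
    (m : ℤ) ^ 2 ∣ ((w : ℤ) ^ 2 + 1) * ∑ b : ZMod m, (b.val : ℤ) ^ 2
      - 2 * w * ∑ b : ZMod m, (b.val : ℤ) * ((w : ZMod m) * b).val := by
  have hsq : ∑ b : ZMod m, (((w : ZMod m) * b).val : ℤ) ^ 2 = ∑ b : ZMod m, (b.val : ℤ) ^ 2 :=
    sum_comp_natCast_mul hw (fun x => (x.val : ℤ) ^ 2)
  have hterm : ∀ b : ZMod m, ((w : ℤ) * b.val - ((w : ZMod m) * b).val) ^ 2 =
      (w : ℤ) ^ 2 * (b.val : ℤ) ^ 2 - 2 * w * ((b.val : ℤ) * ((w : ZMod m) * b).val)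
        + (((w : ZMod m) * b).val : ℤ) ^ 2 := fun b => by ring
  have hexpand : ((w : ℤ) ^ 2 + 1) * ∑ b : ZMod m, (b.val : ℤ) ^ 2
      - 2 * w * ∑ b : ZMod m, (b.val : ℤ) * ((w : ZMod m) * b).val
      = ∑ b : ZMod m, ((w : ℤ) * b.val - ((w : ZMod m) * b).val) ^ 2 := by
    simp only [hterm, sum_add_distrib, sum_sub_distrib, ← mul_sum, hsq]
    ring
  rw [hexpand]
  refine dvd_sum fun b _ => pow_dvd_pow_of_dvd ?_ 2
  rw [← ZMod.intCast_eq_intCast_iff_dvd_sub]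
  push_cast
  rw [natCast_zmod_val, natCast_zmod_val]

theorem exists_twelve_mul_sum_sawtooth_mul_sawtooth_eq {m w : ℕ} [NeZero m] (hw : w.Coprime m) :
    ∃ Q : ℤ, 12 * (w : ℝ) * m * ∑ b : ZMod m, sawtooth b * sawtooth ((w : ZMod m) * b) =
      (((w : ℤ) ^ 2 + 1) * (m - 1) * (2 * m - 1) - m * (6 * Q + 3 * w * (m - 1)) : ℤ) := by
  obtain ⟨Q, hQ⟩ := sq_dvd_sum_val_sq_sub_sum_val_mul_val hw
  refine ⟨Q, ?_⟩
  have hQℝ : ((w : ℝ) ^ 2 + 1) * ∑ b : ZMod m, (b.val : ℝ) ^ 2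
      - 2 * w * ∑ b : ZMod m, (b.val : ℝ) * ((w : ZMod m) * b).val = m ^ 2 * Q := by
    exact_mod_cast hQ
  have hsq : 6 * ∑ b : ZMod m, (b.val : ℝ) ^ 2 = m * (m - 1) * (2 * m - 1) := by
    rw [sum_comp_val (fun n => (n : ℝ) ^ 2), six_mul_sum_range_natCast_sq]
  have hm : (m : ℝ) ≠ 0 := NeZero.ne _
  push_cast
  apply mul_left_cancel₀ (pow_ne_zero 2 hm)
  linear_combination 3 * w * m * four_mul_sq_mul_sum_sawtooth_mul_sawtooth hw - 6 * m * hQℝ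
    + m * ((w : ℝ) ^ 2 + 1) * hsq

theorem twelve_w_m_mul_dedekindSum_modEq_general
    (m w : ℕ) (hm : 2 ≤ m) (hcop : Nat.Coprime w m) :
    ∃ z : ℤ, 12 * (w : ℝ) * (m : ℝ) * dedekindSum w m = (z : ℝ) ∧
      z ≡ (w : ℤ) ^ 2 + 1 [ZMOD (m : ℤ)] := by
  have : NeZero m := ⟨by omega⟩
  obtain ⟨Q, hQ⟩ := exists_twelve_mul_sum_sawtooth_mul_sawtooth_eq hcop
  refine ⟨_, by rw [dedekindSum_eq_sum_sawtooth_mul_sawtooth hcop, hQ], Int.modEq_iff_dvd.2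
    ⟨((w : ℤ) ^ 2 + 1) * (3 - 2 * m) + 6 * Q + 3 * w * (m - 1), by ring⟩⟩

/-- For `m ≥ 2` and `0 < w < m` with `gcd(w,m)=1`,
    `12wm·s(w;m)` is an integer congruent to `w² + 1` modulo `m`. -/
theorem twelve_w_m_mul_dedekindSum_modEq
    (m w : ℕ) (hm : 2 ≤ m) (hw0 : 0 < w) (hwm : w < m) (hcop : Nat.Coprime w m) :
    ∃ z : ℤ, 12 * (w : ℝ) * (m : ℝ) * dedekindSum w m = (z : ℝ) ∧
      z ≡ (w : ℤ) ^ 2 + 1 [ZMOD (m : ℤ)] :=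
  twelve_w_m_mul_dedekindSum_modEq_general m w hm hcop
end

section
/- Let m ≥ 2, w coprime to m with 0 < w < m, and let w' be the inverse of w mod m with 0 < w' < m. Then the quantity 2 - (w + w')/m + 12·s(w; m) is an integer, where s(w; m) is the Dedekind sum. -/
/-!
For `z ^ m = 1`, `z ≠ 1` one has `(z + 1) / (z - 1) = (1/m) ∑_{a ∈ ℤ/m} σ(a) z^a`, where
`σ(a) = 2a - m` for `a ≢ 0` and `σ(0) = 0`; this is a finite Fourier expansion
`cot (π n / m) = (i/m) ∑_a σ(a) ζ^{an}` with `ζ = exp (2πi/m)`. Orthogonality of the characters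
`a ↦ ζ^{an}` turns the Dedekind sum into the sawtooth sum
`4 m² s(w; m) = ∑_b σ(b) σ(bw) = 4S - m²(m - 1)`, with `S = ∑_b b r_b` and `r_b = bw mod m`.
Writing `bw = m q_b + r_b`, the identity `2w b r_b = w² b² + r_b² - m² q_b²`, summed using
`∑ r_b² = ∑ b²`, gives `12 w S ≡ m (w² + 1) ≡ m w (w + w') (mod m²)`, and `w` cancels.
-/

open Finset Complex
open scoped Real

theorem sub_one_mul_sum_range_mul_pow {R : Type*} [CommRing R] (z : R) (n : ℕ) :
    (z - 1) * ∑ i ∈ range n, (i : R) * z ^ i = n * z ^ n - z * ∑ i ∈ range n, z ^ i := by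
  induction n with
  | zero => simp
  | succ n ih =>
    rw [sum_range_succ, mul_add, ih, sum_range_succ]
    push_cast
    ring

theorem six_mul_sum_range_sq (n : ℕ) :
    6 * ∑ i ∈ range n, (i : ℤ) ^ 2 = n * (n - 1) * (2 * n - 1) := by
  induction n with
  | zero => simp
  | succ n ih =>
    rw [sum_range_succ, mul_add, ih]
    push_cast
    ring

namespace ZMod

variable {m : ℕ} [NeZero m]

theorem sum_val_eq_sum_range {M : Type*} [AddCommMonoid M] (f : ℕ → M) :
    ∑ a : ZMod m, f a.val = ∑ i ∈ range m, f i := by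
  obtain ⟨n, rfl⟩ := Nat.exists_eq_succ_of_ne_zero (NeZero.ne m)
  exact Fin.sum_univ_eq_sum_range f (n + 1)

theorem two_mul_sum_val : 2 * ∑ b : ZMod m, (b.val : ℤ) = m * (m - 1) := by
  have h := sum_range_id_mul_two m
  zify [NeZero.one_le] at h
  rw [sum_val_eq_sum_range (fun i => (i : ℤ))]
  linarith

theorem six_mul_sum_val_sq : 6 * ∑ b : ZMod m, (b.val : ℤ) ^ 2 = m * (m - 1) * (2 * m - 1) := by
  rw [sum_val_eq_sum_range (fun i => (i : ℤ) ^ 2), six_mul_sum_range_sq]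

/-- `sawtooth a = 2m ((a/m))` for the sawtooth function `((x)) = x - ⌊x⌋ - 1/2`, `((n)) = 0`. -/
def sawtooth (a : ZMod m) : ℤ := if a = 0 then 0 else 2 * a.val - m

theorem sawtooth_eq (a : ZMod m) :
    sawtooth a = 2 * a.val - m + if a = 0 then (m : ℤ) else 0 := by
  unfold sawtooth
  split_ifs with h <;> simp [h]

theorem sawtooth_neg (a : ZMod m) : sawtooth (-a) = -sawtooth a := by
  by_cases h : a = 0
  · simp [h, sawtooth]
  · have : NeZero a := ⟨h⟩
    have hval : (-a).val = m - a.val := val_neg_of_ne_zero a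
    simp only [sawtooth, neg_eq_zero, h, if_false, hval, Nat.cast_sub (val_le a)]
    ring

theorem sum_sawtooth : ∑ a : ZMod m, sawtooth a = 0 := by
  have h := Equiv.sum_comp (Equiv.neg (ZMod m)) sawtooth
  simp only [Equiv.neg_apply, sawtooth_neg, sum_neg_distrib] at h
  omega

theorem sub_one_mul_sum_sawtooth_mul_pow {K : Type*} [Field K] {z : K}
    (hz : z ^ m = 1) (hz1 : z ≠ 1) :
    (z - 1) * ∑ a : ZMod m, (sawtooth a : K) * z ^ a.val = m * (z + 1) := by
  have hgeom : ∑ i ∈ range m, z ^ i = 0 := by simp [geom_sum_eq hz1, hz]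
  have hsplit : ∑ a : ZMod m, (sawtooth a : K) * z ^ a.val
      = 2 * ∑ i ∈ range m, (i : K) * z ^ i - m * ∑ i ∈ range m, z ^ i + m := by
    simp only [sawtooth_eq, apply_ite (Int.cast (R := K)), Int.cast_add, Int.cast_sub,
      Int.cast_mul, Int.cast_ofNat, Int.cast_natCast, Int.cast_zero, add_mul, ite_mul, zero_mul,
      sum_add_distrib, sum_ite_eq', mem_univ, if_true, val_zero, pow_zero, mul_one]
    rw [sum_val_eq_sum_range (fun i => (2 * (i : K) - m) * z ^ i)]
    simp only [sub_mul, sum_sub_distrib, mul_assoc, ← mul_sum]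
  rw [hsplit, hgeom, mul_zero, sub_zero, mul_add, mul_left_comm, sub_one_mul_sum_range_mul_pow,
    hz, hgeom]
  ring

theorem sum_stdAddChar_mul (b : ZMod m) :
    ∑ k : ZMod m, stdAddChar (k * b) = if b = 0 then (m : ℂ) else 0 := by
  rw [AddChar.sum_mulShift b (isPrimitive_stdAddChar m), ZMod.card, Nat.cast_ite, Nat.cast_zero]

/-- At the poles `m ∣ n` both sides vanish: Lean's `cot` is `cos / 0 = 0` there. -/
theorem cot_pi_natCast_div_eq_sum_sawtooth (n : ℕ) :
    (Real.cot (π * n / m) : ℂ)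
      = I / m * ∑ a : ZMod m, (sawtooth a : ℂ) * stdAddChar (a * (n : ZMod m)) := by
  by_cases hn : (n : ZMod m) = 0
  · obtain ⟨q, rfl⟩ := (natCast_eq_zero_iff n m).mp hn
    have hm : (m : ℝ) ≠ 0 := Nat.cast_ne_zero.mpr (NeZero.ne m)
    have harg : π * ((m * q : ℕ) : ℝ) / m = q * π := by push_cast; field_simp
    rw [harg, Real.cot_eq_cos_div_sin, Real.sin_nat_mul_pi, div_zero]
    simp only [hn, mul_zero, AddChar.map_zero_eq_one, mul_one, ← Int.cast_sum, sum_sawtooth]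
    simp
  have hexp : Complex.exp (2 * π * I * (n / m)) = stdAddChar (n : ZMod m) := by
    rw [stdAddChar_apply, toCircle_natCast]; ring_nf
  set z := stdAddChar (n : ZMod m)
  have hz1 : z ≠ 1 := fun h => hn (injective_stdAddChar (h.trans (AddChar.map_zero_eq_one _).symm))
  have hzm : z ^ m = 1 := by
    rw [← AddChar.map_nsmul_eq_pow, nsmul_eq_mul, natCast_self, zero_mul, AddChar.map_zero_eq_one]
  have hpow (a : ZMod m) : stdAddChar (a * (n : ZMod m)) = z ^ a.val := by
    rw [← AddChar.map_nsmul_eq_pow, nsmul_eq_mul, natCast_zmod_val]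
  have hz1' : z - 1 ≠ 0 := sub_ne_zero.mpr hz1
  have hm : (m : ℂ) ≠ 0 := Nat.cast_ne_zero.mpr (NeZero.ne m)
  have key : ∑ a : ZMod m, (sawtooth a : ℂ) * z ^ a.val = m * (z + 1) / (z - 1) := by
    rw [eq_div_iff hz1', mul_comm]; exact sub_one_mul_sum_sawtooth_mul_pow hzm hz1
  rw [Complex.ofReal_cot, show ((π * n / m : ℝ) : ℂ) = π * (n / m) by push_cast; ring,
    Complex.cot_pi_eq_exp_ratio, hexp]
  simp_rw [hpow, key]
  field_simp
  ring_nf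
  rw [I_sq]
  ring

theorem sum_cot_mul_stdAddChar (b : ZMod m) :
    ∑ k : ZMod m, (Real.cot (π * k.val / m) : ℂ) * stdAddChar (k * b) = -I * sawtooth b := by
  have hm : (m : ℂ) ≠ 0 := Nat.cast_ne_zero.mpr (NeZero.ne m)
  have hchar (a k : ZMod m) :
      stdAddChar (a * k) * stdAddChar (k * b) = stdAddChar (k * (a + b)) := by
    rw [← AddChar.map_add_eq_mul]; congr 1; ring
  calc ∑ k : ZMod m, (Real.cot (π * k.val / m) : ℂ) * stdAddChar (k * b)
      = I / m * ∑ a : ZMod m, (sawtooth a : ℂ) * ∑ k : ZMod m, stdAddChar (k * (a + b)) := by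
        simp_rw [cot_pi_natCast_div_eq_sum_sawtooth, natCast_zmod_val, mul_sum, sum_mul]
        rw [sum_comm]
        refine sum_congr rfl fun a _ => sum_congr rfl fun k _ => ?_
        rw [← hchar]; ring
    _ = -I * sawtooth b := by
        simp_rw [sum_stdAddChar_mul, add_eq_zero_iff_eq_neg, mul_ite, mul_zero, sum_ite_eq',
          mem_univ, if_true, sawtooth_neg]
        field_simp
        push_cast
        ring

theorem sum_cot_mul_cot_eq_sum_sawtooth (w : ℕ) :
    ∑ k ∈ Ico 1 m, Real.cot (π * k / m) * Real.cot (π * (k * w) / m)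
      = (∑ b : ZMod m, sawtooth b * sawtooth (b * (w : ZMod m)) : ℤ) / m := by
  have hcot (k : ZMod m) : (Real.cot (π * (k.val * w) / m) : ℂ)
      = I / m * ∑ b : ZMod m, (sawtooth b : ℂ) * stdAddChar (k * (b * (w : ZMod m))) := by
    have h := cot_pi_natCast_div_eq_sum_sawtooth (m := m) (k.val * w)
    simp only [Nat.cast_mul, natCast_zmod_val] at h
    rw [h]
    congr 1
    refine sum_congr rfl fun b _ => ?_
    ring_nf
  let f (k : ℕ) := Real.cot (π * k / m) * Real.cot (π * (k * w) / m)
  have hf0 : f 0 = 0 := by simp [f, Real.cot_eq_cos_div_sin]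
  rw [← zero_add (∑ k ∈ Ico 1 m, _), ← hf0, ← sum_eq_sum_Ico_succ_bot (NeZero.pos m),
    ← range_eq_Ico, ← sum_val_eq_sum_range f]
  apply Complex.ofReal_injective
  push_cast
  simp only [f, Complex.ofReal_mul, hcot]
  calc ∑ k : ZMod m, (Real.cot (π * k.val / m) : ℂ)
          * (I / m * ∑ b : ZMod m, (sawtooth b : ℂ) * stdAddChar (k * (b * (w : ZMod m))))
      = I / m * ∑ b : ZMod m, (sawtooth b : ℂ) * ∑ k : ZMod m,
          (Real.cot (π * k.val / m) : ℂ) * stdAddChar (k * (b * (w : ZMod m))) := by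
        simp_rw [mul_sum]
        rw [sum_comm]
        refine sum_congr rfl fun b _ => sum_congr rfl fun k _ => ?_
        ring
    _ = _ := by
        simp_rw [sum_cot_mul_stdAddChar]
        rw [sum_div, mul_sum]
        refine sum_congr rfl fun b _ => ?_
        field_simp
        ring_nf
        rw [I_sq]
        ring

theorem sum_sawtooth_mul_sawtooth_mul_unit (u : (ZMod m)ˣ) :
    ∑ b : ZMod m, sawtooth b * sawtooth (b * (u : ZMod m))
      = 4 * ∑ b : ZMod m, (b.val * (b * (u : ZMod m)).val : ℤ) - m ^ 2 * (m - 1) := by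
  have hterm (b : ZMod m) : sawtooth b * sawtooth (b * (u : ZMod m))
      = (2 * b.val - m) * (2 * (b * (u : ZMod m)).val - m)
        - if b = 0 then (m : ℤ) ^ 2 else 0 := by
    by_cases hb : b = 0
    · simp [hb, sawtooth]; ring
    · simp [sawtooth, hb, Units.mul_left_eq_zero]
  have hperm : ∑ b : ZMod m, ((b * (u : ZMod m)).val : ℤ) = ∑ b : ZMod m, (b.val : ℤ) :=
    Equiv.sum_comp (Units.mulRight u) (fun b : ZMod m => (b.val : ℤ))
  have hexpand (b : ZMod m) : (2 * (b.val : ℤ) - m) * (2 * (b * (u : ZMod m)).val - m)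
      = 4 * (b.val * (b * (u : ZMod m)).val) - 2 * m * b.val - 2 * m * (b * (u : ZMod m)).val
        + m ^ 2 := by ring
  simp only [hterm, hexpand, sum_sub_distrib, sum_add_distrib, sum_ite_eq', mem_univ, if_true,
    ← mul_sum, hperm, sum_const, card_univ, ZMod.card, nsmul_eq_mul]
  linear_combination (-2 * m : ℤ) * two_mul_sum_val (m := m)

theorem sq_dvd_twelve_mul_sum_val_mul_val_sub {w w' : ℕ} (hcop : w.Coprime m)
    (hww' : w * w' ≡ 1 [MOD m]) :
    (m : ℤ) ^ 2 ∣ 12 * ∑ b : ZMod m, (b.val * (b * (w : ZMod m)).val : ℤ) - m * (w + w') := by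
  let q (b : ZMod m) : ℤ := (b.val * w / m : ℕ)
  have hdiv (b : ZMod m) : (b.val * w : ℤ) = m * q b + (b * (w : ZMod m)).val := by
    simp only [q]
    rw [val_mul, val_natCast, Nat.mul_mod_mod]
    exact_mod_cast (Nat.div_add_mod (b.val * w) m).symm
  have hterm (b : ZMod m) : 2 * w * (b.val * (b * (w : ZMod m)).val : ℤ)
      = w ^ 2 * b.val ^ 2 + (b * (w : ZMod m)).val ^ 2 - m ^ 2 * q b ^ 2 := by
    linear_combination (-(m * q b + b.val * w - (b * (w : ZMod m)).val)) * hdiv b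
  have hperm : ∑ b : ZMod m, ((b * (w : ZMod m)).val : ℤ) ^ 2 = ∑ b : ZMod m, (b.val : ℤ) ^ 2 := by
    simpa using Equiv.sum_comp (Units.mulRight (unitOfCoprime w hcop))
      (fun b : ZMod m => (b.val : ℤ) ^ 2)
  have hsum : 2 * w * ∑ b : ZMod m, (b.val * (b * (w : ZMod m)).val : ℤ)
      = (w ^ 2 + 1) * ∑ b : ZMod m, (b.val : ℤ) ^ 2 - m ^ 2 * ∑ b, q b ^ 2 := by
    rw [mul_sum, sum_congr rfl fun b _ => hterm b, sum_sub_distrib, sum_add_distrib, hperm,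
      ← mul_sum, ← mul_sum]
    ring
  obtain ⟨t, ht⟩ := Nat.modEq_iff_dvd.mp hww'
  push_cast at ht
  have hw : (w : ℤ) * (12 * ∑ b : ZMod m, (b.val * (b * (w : ZMod m)).val : ℤ) - m * (w + w'))
      = m ^ 2 * ((w ^ 2 + 1) * (2 * m - 3) + t - 6 * ∑ b, q b ^ 2) := by
    linear_combination 6 * hsum + (w ^ 2 + 1) * six_mul_sum_val_sq (m := m) + m * ht
  exact (Nat.isCoprime_iff_coprime.mpr hcop.symm).pow_left.dvd_of_dvd_mul_left ⟨_, hw⟩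

end ZMod

theorem dedekindSum_eq_sum_sawtooth (w m : ℕ) [NeZero m] :
    dedekindSum w m
      = (∑ b : ZMod m, ZMod.sawtooth b * ZMod.sawtooth (b * (w : ZMod m)) : ℤ) / (4 * m ^ 2) := by
  have hm : (m : ℝ) ≠ 0 := Nat.cast_ne_zero.mpr (NeZero.ne m)
  rw [dedekindSum, ZMod.sum_cot_mul_cot_eq_sum_sawtooth]
  field_simp

theorem orbifold_contribution_isInt_general
    (m w w' : ℕ) (hm : 2 ≤ m) (hcop : Nat.Coprime w m)
    (hww' : w * w' ≡ 1 [MOD m]) :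
    ∃ z : ℤ, 2 - ((w : ℝ) + (w' : ℝ)) / m + 12 * dedekindSum w m = (z : ℝ) := by
  have : NeZero m := ⟨by omega⟩
  obtain ⟨d, hd⟩ := ZMod.sq_dvd_twelve_mul_sum_val_mul_val_sub hcop hww'
  have hsawtooth := ZMod.sum_sawtooth_mul_sawtooth_mul_unit (ZMod.unitOfCoprime w hcop)
  rw [ZMod.coe_unitOfCoprime] at hsawtooth
  refine ⟨d + 5 - 3 * m, ?_⟩
  have hm : (m : ℝ) ≠ 0 := Nat.cast_ne_zero.mpr (NeZero.ne m)
  have hdR := congrArg (Int.cast : ℤ → ℝ) hd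
  rw [dedekindSum_eq_sum_sawtooth, hsawtooth]
  push_cast at hdR ⊢
  field_simp
  linear_combination 4 * hdR

/-- For `m ≥ 2`, `w` coprime to `m` with `0 < w < m`, and `w'` the
    inverse of `w` mod `m` with `0 < w' < m`, the quantity
    `2 - (w + w')/m + 12·s(w;m)` is an integer. -/
theorem orbifold_contribution_isInt
    (m w w' : ℕ) (hm : 2 ≤ m) (hw0 : 0 < w) (hwm : w < m) (hcop : Nat.Coprime w m)
    (hw'0 : 0 < w') (hw'm : w' < m) (hww' : w * w' ≡ 1 [MOD m]) :
    ∃ z : ℤ, 2 - ((w : ℝ) + (w' : ℝ)) / m + 12 * dedekindSum w m = (z : ℝ) :=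
  orbifold_contribution_isInt_general m w w' hm hcop hww'
end
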